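/- Let the LT propagation on the multiplex system G^{1..k} start from a seed set S ⊆ U and the LT propagation on its clique lossless coupled network G start from S' = { s^0 : s ∈ S }. Then for every d ≥ 1, the set of active vertices in G after 2d propagation hops is exactly the set of all copies of the active users: A^{2d}(G,S') = { a^j : a ∈ A^d(G^{1..k},S), 0 ≤ j ≤ k }. -/
import Mathlib


open scoped Classical
set_option linter.unusedSectionVars false
set_option linter.unnecessarySeqFocus false
set_option linter.unusedVariables false

/-- LT active sets on a single directed weighted network `G = (V, w, θ)`:
`ltIter w θ S 0 = S` and
`ltIter w θ S (t+1) = ltIter w θ S t ∪ { x | Σ_{y ∈ A^t} w y x ≥ θ x }`. -/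
noncomputable def ltIter {V : Type*} [Fintype V] [DecidableEq V]
    (w : V → V → ℝ) (θ : V → ℝ) (S : Finset V) : ℕ → Finset V
  | 0 => S
  | t + 1 =>
      ltIter w θ S t ∪
        Finset.univ.filter (fun x => θ x ≤ ∑ y ∈ ltIter w θ S t, w y x)

/-- LT active sets on the multiplex system `G^{1..k}`:
`A^0 = S` and `A^{t+1} = A^t ∪ { u | ∃ i, Σ_{v ∈ A^t} w^i v u ≥ θ^i u }`. -/
noncomputable def multiIter {U : Type*} [Fintype U] [DecidableEq U] {k : ℕ}
    (w : Fin k → U → U → ℝ) (θ : Fin k → U → ℝ) (S : Finset U) : ℕ → Finset U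
  | 0 => S
  | t + 1 =>
      multiIter w θ S t ∪
        Finset.univ.filter
          (fun u => ∃ i : Fin k, θ i u ≤ ∑ v ∈ multiIter w θ S t, w i v u)

/-- Thresholds of the clique lossless coupled network.  The vertex `(u, none)` is the
gateway vertex `u⁰` (threshold 1), and `(u, some i)` is the representative vertex `uⁱ`
(threshold `θ^i(u)` if `u ∈ V^i`, and 1 otherwise, i.e. for dummy vertices). -/
noncomputable def cliqueTheta {U : Type*} [DecidableEq U] {k : ℕ}
    (Vmem : Fin k → Finset U) (θ : Fin k → U → ℝ) : U × Option (Fin k) → ℝ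
  | (_, none) => 1
  | (u, some i) => if u ∈ Vmem i then θ i u else 1

/-- Edge weights of the clique lossless coupled network:
`w(u⁰, vⁱ) = w^i(u, v)` for users `u ≠ v` and `1 ≤ i ≤ k`;
`w(uⁱ, uʲ) = θ(uʲ)` for all `0 ≤ i ≠ j ≤ k` (synchronization clique);
all other weights are 0. -/
noncomputable def cliqueW {U : Type*} [DecidableEq U] {k : ℕ}
    (Vmem : Fin k → Finset U) (w : Fin k → U → U → ℝ) (θ : Fin k → U → ℝ) :
    U × Option (Fin k) → U × Option (Fin k) → ℝ :=
  fun x y =>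
    if x.1 = y.1 then
      if x.2 = y.2 then 0 else cliqueTheta Vmem θ y
    else
      match x.2, y.2 with
      | none, some i => w i x.1 y.1
      | _, _ => 0

section Aux
variable {U : Type*} [Fintype U] [DecidableEq U] {k : ℕ}
variable (Vmem : Fin k → Finset U) (w : Fin k → U → U → ℝ) (θ : Fin k → U → ℝ)

noncomputable def ltStep {V : Type*} [Fintype V] [DecidableEq V]
    (w : V → V → ℝ) (θ : V → ℝ) (A : Finset V) : Finset V :=
  A ∪ Finset.univ.filter (fun x => θ x ≤ ∑ y ∈ A, w y x)

lemma ltIter_succ {V : Type*} [Fintype V] [DecidableEq V]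
    (w : V → V → ℝ) (θ : V → ℝ) (S : Finset V) (t : ℕ) :
    ltIter w θ S (t + 1) = ltStep w θ (ltIter w θ S t) := rfl

noncomputable def mstep (T : Finset U) : Finset U :=
  T ∪ Finset.univ.filter (fun u => ∃ i : Fin k, θ i u ≤ ∑ v ∈ T, w i v u)

lemma multiIter_succ (S : Finset U) (t : ℕ) :
    multiIter w θ S (t + 1) = mstep w θ (multiIter w θ S t) := rfl

noncomputable def mid (T : Finset U) : Finset (U × Option (Fin k)) :=
  T ×ˢ Finset.univ ∪
    Finset.univ.filter
      (fun p => ∃ i : Fin k, p.2 = some i ∧ θ i p.1 ≤ ∑ v ∈ T, w i v p.1)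

lemma cliqueW_gw_some (v u : U) (i : Fin k) (h : v ≠ u) :
    cliqueW Vmem w θ (v, none) (u, some i) = w i v u := by
  simp [cliqueW, h]

lemma cliqueW_some_ne (v u : U) (j : Fin k) (y2 : Option (Fin k)) (h : v ≠ u) :
    cliqueW Vmem w θ (v, some j) (u, y2) = 0 := by
  cases y2 <;> simp [cliqueW, h]

lemma cliqueW_none_none (v u : U) :
    cliqueW Vmem w θ (v, none) (u, none) = 0 := by
  by_cases h : v = u <;> simp [cliqueW, h]

lemma cliqueW_same (u : U) (j j' : Option (Fin k)) (h : j ≠ j') :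
    cliqueW Vmem w θ (u, j) (u, j') = cliqueTheta Vmem θ (u, j') := by
  simp [cliqueW, h]

lemma cliqueTheta_pos (hθpos : ∀ i u, 0 < θ i u) (x : U × Option (Fin k)) :
    0 < cliqueTheta Vmem θ x := by
  obtain ⟨u, _ | i⟩ := x
  · norm_num [cliqueTheta]
  · by_cases h : u ∈ Vmem i
    · simpa [cliqueTheta, h] using hθpos i u
    · norm_num [cliqueTheta, h]

lemma cliqueW_nonneg (hw0 : ∀ i v u, 0 ≤ w i v u) (hθpos : ∀ i u, 0 < θ i u)
    (x y : U × Option (Fin k)) : 0 ≤ cliqueW Vmem w θ x y := by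
  obtain ⟨v, jx⟩ := x; obtain ⟨u, jy⟩ := y
  by_cases h : v = u
  · by_cases h2 : jx = jy
    · simp [cliqueW, h, h2]
    · rw [show ((v, jx) : U × Option (Fin k)) = (u, jx) from by rw [h],
        cliqueW_same Vmem w θ u jx jy h2]
      exact (cliqueTheta_pos Vmem θ hθpos _).le
  · cases jx <;> cases jy <;> simp [cliqueW, h] <;> exact hw0 _ _ _

lemma sum_w_zero (hwV : ∀ i v u, v ∉ Vmem i ∨ u ∉ Vmem i → w i v u = 0)
    (T : Finset U) (i : Fin k) (u : U) (hu : u ∉ Vmem i) :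
    ∑ v ∈ T, w i v u = 0 :=
  Finset.sum_eq_zero fun v _ => hwV i v u (Or.inr hu)

lemma theta_iff (hwV : ∀ i v u, v ∉ Vmem i ∨ u ∉ Vmem i → w i v u = 0)
    (hθpos : ∀ i u, 0 < θ i u) (T : Finset U) (i : Fin k) (u : U) :
    (cliqueTheta Vmem θ (u, some i) ≤ ∑ v ∈ T, w i v u) ↔
      (θ i u ≤ ∑ v ∈ T, w i v u) := by
  by_cases h : u ∈ Vmem i
  · simp [cliqueTheta, h]
  · rw [sum_w_zero Vmem w hwV T i u h]
    simp only [cliqueTheta, h, if_false]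
    constructor <;> intro hle <;> [linarith; linarith [hθpos i u]]

lemma inflow_prod_some (T : Finset U) (u : U) (i : Fin k) (hu : u ∉ T) :
    ∑ y ∈ T ×ˢ (Finset.univ : Finset (Option (Fin k))),
        cliqueW Vmem w θ y (u, some i) = ∑ v ∈ T, w i v u := by
  rw [Finset.sum_product]
  refine Finset.sum_congr rfl fun v hv => ?_
  have hvu : v ≠ u := fun h => hu (h ▸ hv)
  rw [Fintype.sum_option]
  rw [cliqueW_gw_some Vmem w θ v u i hvu]
  rw [Finset.sum_eq_zero fun j _ => cliqueW_some_ne Vmem w θ v u j _ hvu]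
  ring

lemma inflow_prod_none (T : Finset U) (u : U) (hu : u ∉ T) :
    ∑ y ∈ T ×ˢ (Finset.univ : Finset (Option (Fin k))),
        cliqueW Vmem w θ y (u, none) = 0 := by
  rw [Finset.sum_product]
  refine Finset.sum_eq_zero fun v hv => ?_
  have hvu : v ≠ u := fun h => hu (h ▸ hv)
  rw [Fintype.sum_option, cliqueW_none_none,
    Finset.sum_eq_zero fun j _ => cliqueW_some_ne Vmem w θ v u j _ hvu]
  ring

lemma single_le_inflow (hw0 : ∀ i v u, 0 ≤ w i v u) (hθpos : ∀ i u, 0 < θ i u)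
    (A : Finset (U × Option (Fin k))) (u : U) (j₀ j : Option (Fin k))
    (hmem : (u, j₀) ∈ A) (hne : j₀ ≠ j) :
    cliqueTheta Vmem θ (u, j) ≤ ∑ y ∈ A, cliqueW Vmem w θ y (u, j) := by
  rw [← cliqueW_same Vmem w θ u j₀ j hne]
  exact Finset.single_le_sum (fun y _ => cliqueW_nonneg Vmem w θ hw0 hθpos y _) hmem


lemma step_gateways (hw0 : ∀ i v u, 0 ≤ w i v u)
    (hwV : ∀ i v u, v ∉ Vmem i ∨ u ∉ Vmem i → w i v u = 0)
    (hθpos : ∀ i u, 0 < θ i u) (S : Finset U) :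
    ltStep (cliqueW Vmem w θ) (cliqueTheta Vmem θ)
      (S.image (fun s => (s, (none : Option (Fin k))))) = mid w θ S := by
  set S' := S.image (fun s => (s, (none : Option (Fin k)))) with hS'def
  have hmemS' : ∀ x : U × Option (Fin k), x ∈ S' ↔ x.1 ∈ S ∧ x.2 = none := by
    rintro ⟨u, j⟩
    simp only [hS'def, Finset.mem_image, Prod.mk.injEq]
    constructor
    · rintro ⟨s, hs, rfl, rfl⟩; exact ⟨hs, rfl⟩
    · rintro ⟨hu, rfl⟩; exact ⟨u, hu, rfl, rfl⟩
  have hsum : ∀ x : U × Option (Fin k),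
      ∑ y ∈ S', cliqueW Vmem w θ y x = ∑ s ∈ S, cliqueW Vmem w θ (s, none) x := by
    intro x
    rw [hS'def, Finset.sum_image]
    intro a _ b _ hab
    simpa using hab
  ext ⟨u, j⟩
  simp only [ltStep, mid, Finset.mem_union, Finset.mem_filter, Finset.mem_univ, true_and,
    Finset.mem_product, and_true]
  constructor
  · rintro (hmem | hcond)
    · exact Or.inl ((hmemS' _).mp hmem).1
    · rw [hsum] at hcond
      match j with
      | none =>
          exfalso
          rw [Finset.sum_eq_zero fun s _ => cliqueW_none_none Vmem w θ s u] at hcond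
          simp only [cliqueTheta] at hcond
          linarith
      | some i =>
          by_cases hu : u ∈ S
          · exact Or.inl hu
          · refine Or.inr ⟨i, rfl, ?_⟩
            rw [Finset.sum_congr rfl fun s hs =>
              cliqueW_gw_some Vmem w θ s u i (fun h => hu (h ▸ hs))] at hcond
            exact (theta_iff Vmem w θ hwV hθpos S i u).mp hcond
  · rintro (hu | ⟨i, rfl, hle⟩)
    · match j with
      | none => exact Or.inl ((hmemS' _).mpr ⟨hu, rfl⟩)
      | some i =>
          refine Or.inr ?_
          exact single_le_inflow Vmem w θ hw0 hθpos S' u none (some i)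
            ((hmemS' _).mpr ⟨hu, rfl⟩) (by simp)
    · by_cases hu : u ∈ S
      · refine Or.inr ?_
        exact single_le_inflow Vmem w θ hw0 hθpos S' u none (some i)
          ((hmemS' _).mpr ⟨hu, rfl⟩) (by simp)
      · refine Or.inr ?_
        rw [hsum, Finset.sum_congr rfl fun s hs =>
          cliqueW_gw_some Vmem w θ s u i (fun h => hu (h ▸ hs))]
        exact (theta_iff Vmem w θ hwV hθpos S i u).mpr hle

lemma step_prod (hw0 : ∀ i v u, 0 ≤ w i v u)
    (hwV : ∀ i v u, v ∉ Vmem i ∨ u ∉ Vmem i → w i v u = 0)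
    (hθpos : ∀ i u, 0 < θ i u) (T : Finset U) :
    ltStep (cliqueW Vmem w θ) (cliqueTheta Vmem θ)
      (T ×ˢ (Finset.univ : Finset (Option (Fin k)))) = mid w θ T := by
  ext ⟨u, j⟩
  simp only [ltStep, mid, Finset.mem_union, Finset.mem_filter, Finset.mem_univ, true_and,
    Finset.mem_product, and_true]
  constructor
  · rintro (hmem | hcond)
    · exact Or.inl hmem
    · by_cases hu : u ∈ T
      · exact Or.inl hu
      · match j with
        | none =>
            exfalso
            rw [inflow_prod_none Vmem w θ T u hu] at hcond
            simp only [cliqueTheta] at hcond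
            linarith
        | some i =>
            refine Or.inr ⟨i, rfl, ?_⟩
            rw [inflow_prod_some Vmem w θ T u i hu] at hcond
            exact (theta_iff Vmem w θ hwV hθpos T i u).mp hcond
  · rintro (hu | ⟨i, rfl, hle⟩)
    · exact Or.inl hu
    · by_cases hu : u ∈ T
      · exact Or.inl hu
      · refine Or.inr ?_
        rw [inflow_prod_some Vmem w θ T u i hu]
        exact (theta_iff Vmem w θ hwV hθpos T i u).mpr hle

lemma step_mid (hw0 : ∀ i v u, 0 ≤ w i v u)
    (hwV : ∀ i v u, v ∉ Vmem i ∨ u ∉ Vmem i → w i v u = 0)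
    (hθpos : ∀ i u, 0 < θ i u) (T : Finset U) :
    ltStep (cliqueW Vmem w θ) (cliqueTheta Vmem θ) (mid w θ T) =
      (mstep w θ T) ×ˢ (Finset.univ : Finset (Option (Fin k))) := by
  ext ⟨u, j⟩
  simp only [ltStep, Finset.mem_union, Finset.mem_filter, Finset.mem_univ, true_and,
    Finset.mem_product, and_true]
  constructor
  · intro h
    show u ∈ mstep w θ T
    by_contra hu
    have huT : u ∉ T := fun h' => hu (Finset.mem_union_left _ h')
    have huc : ¬ ∃ i : Fin k, θ i u ≤ ∑ v ∈ T, w i v u := fun h' =>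
      hu (Finset.mem_union_right _ (Finset.mem_filter.mpr ⟨Finset.mem_univ _, h'⟩))
    rcases h with hmem | hcond
    · simp only [mid, Finset.mem_union, Finset.mem_filter, Finset.mem_univ, true_and,
        Finset.mem_product, and_true] at hmem
      rcases hmem with hm | ⟨i, _, hle⟩
      · exact huT hm
      · exact huc ⟨i, hle⟩
    · have hred : ∑ y ∈ mid w θ T, cliqueW Vmem w θ y (u, j)
          = ∑ y ∈ T ×ˢ (Finset.univ : Finset (Option (Fin k))), cliqueW Vmem w θ y (u, j) := by
        refine (Finset.sum_subset Finset.subset_union_left fun y hy hyn => ?_).symm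
        have hy' : y ∈ Finset.univ.filter
            (fun p : U × Option (Fin k) =>
              ∃ i : Fin k, p.2 = some i ∧ θ i p.1 ≤ ∑ v ∈ T, w i v p.1) := by
          rcases Finset.mem_union.mp hy with h1 | h2
          · exact absurd h1 hyn
          · exact h2
        obtain ⟨v, jv⟩ := y
        obtain ⟨i', hji', hle'⟩ := (Finset.mem_filter.mp hy').2
        subst hji'
        have hvu : v ≠ u := fun h => huc ⟨i', h ▸ hle'⟩
        exact cliqueW_some_ne Vmem w θ v u i' j hvu
      rw [hred] at hcond
      match j with
      | none =>
          rw [inflow_prod_none Vmem w θ T u huT] at hcond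
          simp only [cliqueTheta] at hcond
          linarith
      | some i =>
          rw [inflow_prod_some Vmem w θ T u i huT] at hcond
          exact huc ⟨i, (theta_iff Vmem w θ hwV hθpos T i u).mp hcond⟩
  · intro hu
    rcases Finset.mem_union.mp hu with hT | hF
    · exact Or.inl (Finset.mem_union_left _
        (Finset.mem_product.mpr ⟨hT, Finset.mem_univ _⟩))
    · obtain ⟨-, i₀, hle⟩ := Finset.mem_filter.mp hF
      have hmid : (u, some i₀) ∈ mid w θ T :=
        Finset.mem_union_right _ (Finset.mem_filter.mpr ⟨Finset.mem_univ _, i₀, rfl, hle⟩)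
      by_cases hj : j = some i₀
      · exact Or.inl (hj ▸ hmid)
      · exact Or.inr (single_le_inflow Vmem w θ hw0 hθpos (mid w θ T) u (some i₀) j
          hmid (fun h => hj h.symm))

end Aux

/-- **Theorem 1.** With the LT propagation on the multiplex system
starting from `S` and on its clique lossless coupled network starting from
`S' = { s⁰ : s ∈ S }`, for every `d ≥ 1` the active set in `G` after `2d` hops is
exactly the set of all `k+1` copies of the active users:
`A^{2d}(G, S') = { aʲ : a ∈ A^d(G^{1..k}, S), 0 ≤ j ≤ k }`. -/
theorem lossless_active_set_eq
    {U : Type*} [Fintype U] [DecidableEq U] {k : ℕ} (hk : 1 ≤ k)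
    (Vmem : Fin k → Finset U) (w : Fin k → U → U → ℝ) (θ : Fin k → U → ℝ)
    (hw0 : ∀ i v u, 0 ≤ w i v u)
    (hwV : ∀ i v u, v ∉ Vmem i ∨ u ∉ Vmem i → w i v u = 0)
    (hθpos : ∀ i u, 0 < θ i u)
    (S : Finset U) (d : ℕ) (hd : 1 ≤ d) :
    ltIter (cliqueW Vmem w θ) (cliqueTheta Vmem θ)
        (S.image (fun s => (s, (none : Option (Fin k))))) (2 * d) =
      (multiIter w θ S d) ×ˢ (Finset.univ : Finset (Option (Fin k))) := by
  induction d, hd using Nat.le_induction with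
  | base =>
      rw [show 2 * 1 = 1 + 1 from rfl, ltIter_succ, ltIter_succ,
        show ltIter (cliqueW Vmem w θ) (cliqueTheta Vmem θ)
          (S.image (fun s => (s, (none : Option (Fin k))))) 0
          = S.image (fun s => (s, (none : Option (Fin k)))) from rfl,
        step_gateways Vmem w θ hw0 hwV hθpos S,
        step_mid Vmem w θ hw0 hwV hθpos S]
      rfl
  | succ d hd ih =>
      rw [show 2 * (d + 1) = 2 * d + 1 + 1 by ring, ltIter_succ, ltIter_succ, ih,
        step_prod Vmem w θ hw0 hwV hθpos _,
        step_mid Vmem w θ hw0 hwV hθpos _,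
        multiIter_succ]
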